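/- arXiv:1602.00935 — 2 statements merged into one kernel-verified Lean document; each statement's English description precedes it below -/
import Mathlib

section
/- For every n ≥ 2 and every r ∈ {1,…,n−1}, the maximum of ℓ(K_n, α) over all α ∈ Sing_n of rank r equals n + ⌊(r−2)/2⌋ (integer floor), and the maximum of ℓ(K_n, α) over all α ∈ Sing_n equals ⌊3(n−1)/2⌋. -/
noncomputable section

variable {V : Type*}

/-- The arc `(a→b)`: the map sending `a` to `b` and fixing every other point. -/
def arcMap [DecidableEq V] (a b : V) : V → V := fun x => if x = a then b else x

/-- Evaluate a word of arcs, applying the arcs from left to right. -/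
def wordEval [DecidableEq V] (w : List (V × V)) : V → V :=
  fun x => w.foldl (fun y e => arcMap e.1 e.2 y) x

/-- `α ∈ ⟨D⟩`: `α` is a (nonempty) product of arcs of the digraph `D`. -/
def InGen [DecidableEq V] (D : V → V → Prop) (α : V → V) : Prop :=
  ∃ w : List (V × V), w ≠ [] ∧ (∀ e ∈ w, D e.1 e.2) ∧ wordEval w = α

/-- `ℓ(D, α)`: the minimal length of a word in the arcs of `D` expressing `α`. -/
def arcLen [DecidableEq V] (D : V → V → Prop) (α : V → V) : ℕ :=
  sInf {k | ∃ w : List (V × V), w.length = k ∧ (∀ e ∈ w, D e.1 e.2) ∧ wordEval w = α}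

/-- `fix(α)`: the number of fixed points of `α`. -/
def fixCnt (α : V → V) : ℕ := Set.ncard {x | α x = x}

/-- `rk(α)`: the rank of `α`, i.e. the cardinality of its image. -/
def rnk (α : V → V) : ℕ := Set.ncard (Set.range α)

/-- A set `C` is a cyclic orbit of `α` if it is a weakly connected component of the
functional digraph of `α` (edges `(x, α x)`) which is a directed cycle on at least two
vertices: equivalently, `C` is the forward orbit of a periodic point, has at least two
elements, and is closed under taking preimages. -/
def IsCyclicOrbit (α : V → V) (C : Set V) : Prop :=
  2 ≤ C.ncard ∧ (∃ x ∈ C, (∃ k, 0 < k ∧ α^[k] x = x) ∧ C = {y | ∃ k, α^[k] x = y}) ∧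
    ∀ y : V, α y ∈ C → y ∈ C

/-- `cycl(α)`: the number of cyclic orbits of `α`. -/
def cyclCnt (α : V → V) : ℕ := Set.ncard {C : Set V | IsCyclicOrbit α C}

/-- `D` is connected: any two vertices are joined by a directed path in some direction. -/
def ConnectedDigraph (D : V → V → Prop) : Prop :=
  ∀ u v : V, Relation.ReflTransGen D u v ∨ Relation.ReflTransGen D v u

/-- `D` is closed (equal to its closure): whenever `(b,a)` is an edge lying on a directed
cycle of `D` (i.e. there is a directed path from `a` back to `b`), `(a,b)` is also an edge. -/
def ClosedDigraph (D : V → V → Prop) : Prop :=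
  ∀ a b : V, D b a → Relation.ReflTransGen D a b → D a b

/-- Property (★): if `v0, v1, v2` is a directed path with `d_D(v0,v2) = 2`, then every
out-neighbour of `v1` and of `v2` lies in `{v0, v1, v2}`. -/
def StarCond (D : V → V → Prop) : Prop :=
  ∀ v0 v1 v2 : V, D v0 v1 → D v1 v2 → v0 ≠ v2 → ¬ D v0 v2 →
    ∀ u : V, (D v1 u ∨ D v2 u) → (u = v0 ∨ u = v1 ∨ u = v2)

/-- `C` is a strong component of `D`. -/
def IsSC (D : V → V → Prop) (C : Set V) : Prop :=
  ∃ v : V, C = {u | Relation.ReflTransGen D u v ∧ Relation.ReflTransGen D v u}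

/-- `C1` connects to `C2`: some edge goes from `C1` to `C2`. -/
def ConnectsTo (D : V → V → Prop) (C1 C2 : Set V) : Prop :=
  ∃ v1 ∈ C1, ∃ v2 ∈ C2, D v1 v2

/-- `C1` fully connects to `C2`: all pairs are edges. -/
def FullyConnects (D : V → V → Prop) (C1 C2 : Set V) : Prop :=
  ∀ v1 ∈ C1, ∀ v2 ∈ C2, D v1 v2

/-- A terminal strong component: it connects to no other strong component. -/
def IsTerminalSC (D : V → V → Prop) (C : Set V) : Prop :=
  IsSC D C ∧ ∀ C' : Set V, IsSC D C' → C' ≠ C → ¬ ConnectsTo D C C'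

/-- Property (★★): nonterminal strong components have at most 2 vertices and terminal
strong components have at most 3 vertices. -/
def StarStarCond (D : V → V → Prop) : Prop :=
  ∀ C : Set V, IsSC D C →
    (IsTerminalSC D C → C.ncard ≤ 3) ∧ (¬ IsTerminalSC D C → C.ncard ≤ 2)

/-- The induced subdigraph on `C` is an undirected path `a - b - c` on three vertices. -/
def IsP3 (D : V → V → Prop) (C : Set V) : Prop :=
  ∃ a b c : V, a ≠ b ∧ b ≠ c ∧ a ≠ c ∧ C = {a, b, c} ∧
    ∀ u ∈ C, ∀ w ∈ C,
      (D u w ↔ (u = a ∧ w = b) ∨ (u = b ∧ w = a) ∨ (u = b ∧ w = c) ∨ (u = c ∧ w = b))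

/-- `D` has a subdigraph isomorphic to `H`: an injection mapping edges of `H` to edges of `D`. -/
def HasSubdigraph (D : V → V → Prop) {m : ℕ} (H : Fin m → Fin m → Prop) : Prop :=
  ∃ f : Fin m → V, Function.Injective f ∧ ∀ i j : Fin m, H i j → D (f i) (f j)

/-- `Θ_k`: the directed cycle on `k` vertices. -/
def Theta (k : ℕ) : Fin k → Fin k → Prop := fun i j => (j : ℕ) = ((i : ℕ) + 1) % k

/-- `Γ1` (vertices relabelled from `{1,…,5}` to `{0,…,4}`). -/
def Gamma1 : Fin 5 → Fin 5 → Prop := fun i j =>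
  ((i : ℕ), (j : ℕ)) ∈ [(0,3),(3,0),(1,3),(3,1),(2,3),(3,2),(3,4)]

/-- `Γ2` (vertices relabelled from `{1,…,5}` to `{0,…,4}`). -/
def Gamma2 : Fin 5 → Fin 5 → Prop := fun i j =>
  ((i : ℕ), (j : ℕ)) ∈ [(0,2),(2,0),(1,2),(2,1),(2,3),(3,2),(3,4)]

/-- `Γ3` (vertices relabelled from `{1,…,4}` to `{0,…,3}`). -/
def Gamma3 : Fin 4 → Fin 4 → Prop := fun i j =>
  ((i : ℕ), (j : ℕ)) ∈ [(0,1),(1,2),(2,0),(2,3)]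

/-- `Γ4` (vertices relabelled from `{1,…,5}` to `{0,…,4}`). -/
def Gamma4 : Fin 5 → Fin 5 → Prop := fun i j =>
  ((i : ℕ), (j : ℕ)) ∈ [(0,1),(1,2),(2,3),(3,0),(3,4)]

/-- No subdigraph isomorphic to `Γ1`, `Γ2`, `Γ3`, `Γ4` or `Θ_k` for `k ≥ 5`. -/
def ForbiddenFree (D : V → V → Prop) : Prop :=
  ¬ HasSubdigraph D Gamma1 ∧ ¬ HasSubdigraph D Gamma2 ∧ ¬ HasSubdigraph D Gamma3 ∧
    ¬ HasSubdigraph D Gamma4 ∧ ∀ k : ℕ, 5 ≤ k → ¬ HasSubdigraph D (Theta k)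

/-- `D` is acyclic: it has no directed cycle. -/
def AcyclicRel (D : V → V → Prop) : Prop := ∀ v : V, ¬ Relation.TransGen D v v

/-- `ψ_A(u,w)`: the maximal number of edges of a directed path from `u` to `w` in `A`
(in particular `ψ_A(u,u) = 0`). -/
def psiLongest (A : V → V → Prop) (u w : V) : ℕ :=
  sSup {l | ∃ p : List V, p.Chain' A ∧ p.Nodup ∧
    p.head? = some u ∧ p.getLast? = some w ∧ p.length = l + 1}

/-- `d_D(u,w)`: the minimal number of edges of a directed path from `u` to `w` in `D`. -/
def ddist (D : V → V → Prop) (u w : V) : ℕ :=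
  sInf {l | ∃ p : List V, p.Chain' D ∧ p.head? = some u ∧ p.getLast? = some w ∧
    p.length = l + 1}

/-- A tournament: no loops, and exactly one of `(u,v)`, `(v,u)` is an edge for `u ≠ v`. -/
def IsTournament (D : V → V → Prop) : Prop :=
  (∀ v : V, ¬ D v v) ∧ ∀ u v : V, u ≠ v → (D u v ∨ D v u) ∧ ¬ (D u v ∧ D v u)

/-- A strong (strongly connected) digraph. -/
def IsStrongDigraph (D : V → V → Prop) : Prop :=
  ∀ u v : V, Relation.ReflTransGen D u v

/-!
Write `φ(f)` for the number of points moved by `f` plus the number of its isolated cycles (cycles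
of length `≥ 2` into which nothing outside maps). Composing with an arc raises `φ` by at most one,
and every non-injective `f` is `(a→b) ∘ g` or `g ∘ (a→b)` for some `g` that is again non-injective
or the identity and has `φ(g) < φ(f)`; hence `ℓ(K_n, f) = φ(f)`. The image of `f` contains the
fixed points and the isolated cycles, each of size `≥ 2`, and two more points if `f` has no fixed
point, so `φ(f) ≤ n - 1 + ⌊rk f / 2⌋`. Maps made of `⌊r/2⌋` disjoint transpositions, with all
other points sent to a single point, attain this bound.
-/

open Finset Function

theorem Set.EqOn.iterate {α : Type*} {f g : α → α} {s : Set α} (h : Set.EqOn f g s)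
    (hf : Set.MapsTo f s s) (n : ℕ) : Set.EqOn f^[n] g^[n] s := by
  induction n with
  | zero => exact fun _ _ => rfl
  | succ n ih =>
    intro x hx
    rw [iterate_succ_apply', iterate_succ_apply', ← ih hx, h (hf.iterate n hx)]

/-- The finset form of the paper's cyclic orbits (`IsCyclicOrbit`). -/
structure IsIsolatedCycle (f : V → V) (C : Finset V) : Prop where
  nonempty : C.Nonempty
  mapsTo : Set.MapsTo f C C
  mem_of_apply_mem : ∀ ⦃y⦄, f y ∈ C → y ∈ C
  apply_ne : ∀ ⦃x⦄, x ∈ C → f x ≠ x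
  exists_iterate_eq : ∀ ⦃x⦄, x ∈ C → ∀ ⦃y⦄, y ∈ C → ∃ k, f^[k] x = y

namespace IsIsolatedCycle

variable {f g : V → V} {C C' : Finset V} {x : V}

lemma iterate_mem (h : IsIsolatedCycle f C) (hx : x ∈ C) (k : ℕ) : f^[k] x ∈ C :=
  h.mapsTo.iterate k hx

lemma exists_isPeriodicPt (h : IsIsolatedCycle f C) (hx : x ∈ C) :
    ∃ k, 0 < k ∧ IsPeriodicPt f k x := by
  obtain ⟨k, hk⟩ := h.exists_iterate_eq (h.mapsTo hx) hx
  exact ⟨k + 1, k.succ_pos, by rwa [IsPeriodicPt, IsFixedPt, iterate_succ_apply]⟩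

lemma exists_apply_eq (h : IsIsolatedCycle f C) (hx : x ∈ C) : ∃ y ∈ C, f y = x := by
  obtain ⟨k, hk⟩ := h.exists_iterate_eq (h.mapsTo hx) hx
  cases k with
  | zero => exact absurd hk (h.apply_ne hx)
  | succ k =>
    refine ⟨f^[k] (f x), h.iterate_mem (h.mapsTo hx) k, ?_⟩
    rwa [← iterate_succ_apply' f]

lemma notMem_of_forall_ne (h : IsIsolatedCycle f C) (hz : ∀ y, f y ≠ x) : x ∉ C := fun hx =>
  let ⟨y, _, hy⟩ := h.exists_apply_eq hx; hz y hy

lemma injOn (h : IsIsolatedCycle f C) : Set.InjOn f C := by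
  intro u hu v hv huv
  obtain ⟨p, hp, hpu⟩ := h.exists_isPeriodicPt hu
  obtain ⟨q, hq, hqv⟩ := h.exists_isPeriodicPt hv
  have hu' := (hpu.mul_const q).eq
  have hv' := (hqv.const_mul p).eq
  obtain ⟨N, hN⟩ : ∃ N, p * q = N + 1 := ⟨p * q - 1, by have := Nat.mul_pos hp hq; omega⟩
  rw [hN, iterate_succ_apply, huv] at hu'
  rw [hN, iterate_succ_apply] at hv'
  exact hu'.symm.trans hv'

lemma subset (h : IsIsolatedCycle f C) (h' : IsIsolatedCycle f C') (hx : x ∈ C)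
    (hx' : x ∈ C') : C ⊆ C' := fun _ hy =>
  let ⟨k, hk⟩ := h.exists_iterate_eq hx hy; hk ▸ h'.iterate_mem hx' k

lemma eq_of_mem (h : IsIsolatedCycle f C) (h' : IsIsolatedCycle f C') (hx : x ∈ C)
    (hx' : x ∈ C') : C = C' :=
  (h.subset h' hx hx').antisymm (h'.subset h hx' hx)

lemma disjoint (h : IsIsolatedCycle f C) (h' : IsIsolatedCycle f C') (hne : C ≠ C') :
    Disjoint C C' :=
  Finset.disjoint_left.2 fun _ hx hx' => hne (h.eq_of_mem h' hx hx')

lemma two_le_card (h : IsIsolatedCycle f C) : 2 ≤ #C :=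
  let ⟨x, hx⟩ := h.nonempty
  Finset.one_lt_card.2 ⟨f x, h.mapsTo hx, x, hx, h.apply_ne hx⟩

lemma congr (h : IsIsolatedCycle f C) (heq : Set.EqOn f g C) (hback : ∀ ⦃y⦄, g y ∈ C → y ∈ C) :
    IsIsolatedCycle g C where
  nonempty := h.nonempty
  mapsTo _ hx := heq hx ▸ h.mapsTo hx
  mem_of_apply_mem := hback
  apply_ne _ hx := heq hx ▸ h.apply_ne hx
  exists_iterate_eq _ hx _ hy :=
    let ⟨k, hk⟩ := h.exists_iterate_eq hx hy; ⟨k, (heq.iterate h.mapsTo k hx).symm.trans hk⟩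

variable [DecidableEq V] {a b : V}

lemma isIsolatedCycle_update (h : IsIsolatedCycle f C) (ha : a ∉ C) (hb : b ∉ C) :
    IsIsolatedCycle (update f a b) C := by
  refine h.congr (fun x hx => (update_of_ne (ne_of_mem_of_not_mem hx ha) _ _).symm) fun y hy => ?_
  by_cases hya : y = a
  · rw [hya, update_self] at hy
    exact absurd hy hb
  · exact h.mem_of_apply_mem (by rwa [update_of_ne hya] at hy)

lemma of_update (h : IsIsolatedCycle (Function.update f a b) C) (ha : a ∉ C) (hfa : f a ∉ C) :
    IsIsolatedCycle f C := by
  simpa using h.isIsolatedCycle_update ha hfa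

end IsIsolatedCycle

section Arcs

variable [DecidableEq V] {f : V → V} {C K : Finset V} {a b y z : V}

lemma wordEval_nil : wordEval ([] : List (V × V)) = id := rfl

lemma wordEval_cons (e : V × V) (w : List (V × V)) :
    wordEval (e :: w) = wordEval w ∘ arcMap e.1 e.2 := rfl

lemma wordEval_concat (w : List (V × V)) (e : V × V) :
    wordEval (w ++ [e]) = arcMap e.1 e.2 ∘ wordEval w := by
  funext x
  simp [wordEval, List.foldl_append]

lemma comp_arcMap (f : V → V) (a b : V) : f ∘ arcMap a b = update f a (f b) := by
  funext x
  by_cases hx : x = a <;> simp [arcMap, hx]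

lemma arcMap_comp_update (hz : ∀ x, f x ≠ z) : arcMap z (f y) ∘ update f y z = f := by
  funext x
  by_cases hx : x = y
  · simp [arcMap, hx]
  · simp [arcMap, hx, hz x]

lemma update_comp_arcMap (hab : a ≠ b) (h : f a = f b) : update f a a ∘ arcMap a b = f := by
  rw [comp_arcMap, update_idem, update_of_ne hab.symm, ← h, update_eq_self]

lemma IsIsolatedCycle.notMem_of_comp_arcMap (hab : a ≠ b)
    (hK : IsIsolatedCycle (f ∘ arcMap a b) K) : a ∉ K := by
  intro haK
  have hfab : (f ∘ arcMap a b) b = (f ∘ arcMap a b) a := by simp [arcMap, hab.symm]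
  exact hab (hK.injOn haK (hK.mem_of_apply_mem (hfab ▸ hK.mapsTo haK)) hfab.symm)

lemma IsIsolatedCycle.of_comp_arcMap (hab : a ≠ b)
    (hK : IsIsolatedCycle (f ∘ arcMap a b) K) (hfa : f a ∉ K) : IsIsolatedCycle f K :=
  (comp_arcMap f a b ▸ hK).of_update (hK.notMem_of_comp_arcMap hab) hfa

lemma IsIsolatedCycle.not_injective_update (hC : IsIsolatedCycle f C) (hy : y ∈ C)
    (hf : ¬ Injective f) : ¬ Injective (update f y z) := by
  obtain ⟨u, v, huv, hne⟩ := not_injective_iff.1 hf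
  have hu : u ∉ C := fun hu =>
    hne (hC.injOn hu (hC.mem_of_apply_mem (huv ▸ hC.mapsTo hu)) huv)
  have hv : v ∉ C := fun hv =>
    hne (hC.injOn (hC.mem_of_apply_mem (huv.symm ▸ hC.mapsTo hv)) hv huv)
  refine not_injective_iff.2 ⟨u, v, ?_, hne⟩
  rw [update_of_ne (ne_of_mem_of_not_mem hy hu).symm,
    update_of_ne (ne_of_mem_of_not_mem hy hv).symm, huv]

/-- `a` is the predecessor of `f z` on the cycle closed by fixing `z`. -/
lemma exists_update_self_of_isIsolatedCycle_update (hf : ∀ C, ¬ IsIsolatedCycle f C)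
    (hK : IsIsolatedCycle (update f z z) K) :
    ∃ a, a ≠ z ∧ f a = f z ∧ f a ≠ a ∧ ∀ C, ¬ IsIsolatedCycle (update f a a) C := by
  have hzK : z ∉ K := fun hzK => hK.apply_ne hzK (update_self ..)
  have hgf : Set.EqOn (update f z z) f K := fun x hx =>
    update_of_ne (ne_of_mem_of_not_mem hx hzK) _ _
  have hfzK : f z ∈ K := by_contra fun h => hf K (hK.of_update hzK h)
  obtain ⟨a, haK, ha⟩ := hK.exists_apply_eq hfzK
  have hfa : f a = f z := (hgf haK).symm.trans ha
  refine ⟨a, ne_of_mem_of_not_mem haK hzK, hfa, hgf haK ▸ hK.apply_ne haK, fun K' hK' => ?_⟩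
  have haK' : a ∉ K' := fun h => hK'.apply_ne h (update_self ..)
  have hfK' : Set.MapsTo f K' K' := fun x hx =>
    update_of_ne (ne_of_mem_of_not_mem hx haK') a f ▸ hK'.mapsTo hx
  refine hf K' (hK'.of_update haK' fun hfaK' => haK' ?_)
  obtain ⟨k, hk⟩ := hK.exists_iterate_eq hfzK haK
  rw [← hk, hgf.iterate hK.mapsTo k hfzK]
  exact hfK'.iterate k (hfa ▸ hfaK')

end Arcs

section Counting

variable [Fintype V] {f : V → V} {x : V}

open Classical in
def isolatedCycles (f : V → V) : Finset (Finset V) := univ.filter (IsIsolatedCycle f)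

lemma mem_isolatedCycles {C : Finset V} : C ∈ isolatedCycles f ↔ IsIsolatedCycle f C := by
  simp [isolatedCycles]

lemma isolatedCycles_eq_empty : isolatedCycles f = ∅ ↔ ∀ C, ¬ IsIsolatedCycle f C := by
  simp [Finset.eq_empty_iff_forall_notMem, mem_isolatedCycles]

lemma isolatedCycles_id : isolatedCycles (id : V → V) = ∅ :=
  isolatedCycles_eq_empty.2 fun _ hC =>
    let ⟨_, hx⟩ := hC.nonempty; hC.apply_ne hx rfl

variable [DecidableEq V] {a b : V}

lemma card_filter_mem_isolatedCycles_le_one :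
    #((isolatedCycles f).filter (x ∈ ·)) ≤ 1 :=
  Finset.card_le_one.2 fun _ hC _ hC' =>
    (mem_isolatedCycles.1 (mem_filter.1 hC).1).eq_of_mem
      (mem_isolatedCycles.1 (mem_filter.1 hC').1) (mem_filter.1 hC).2 (mem_filter.1 hC').2

def movedPts (f : V → V) : Finset V := univ.filter fun x => f x ≠ x

/-- `n - fix(f) + cycl(f)` in the paper's notation. -/
def arcCost (f : V → V) : ℕ := #(movedPts f) + #(isolatedCycles f)

lemma mem_movedPts : x ∈ movedPts f ↔ f x ≠ x := by simp [movedPts]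

lemma movedPts_id : movedPts (id : V → V) = ∅ := by simp [movedPts]

lemma arcCost_id : arcCost (id : V → V) = 0 := by
  simp [arcCost, movedPts_id, isolatedCycles_id]

lemma movedPts_update_subset : movedPts (update f a b) ⊆ insert a (movedPts f) := by
  intro x hx
  by_cases hxa : x = a
  · exact hxa ▸ mem_insert_self _ _
  · rw [mem_movedPts, update_of_ne hxa] at hx
    exact mem_insert_of_mem (mem_movedPts.2 hx)

lemma movedPts_update_self : movedPts (update f a a) = (movedPts f).erase a := by
  ext x
  by_cases hxa : x = a <;> simp [mem_movedPts, hxa]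

lemma movedPts_update_of_ne (hfa : f a ≠ a) (hba : b ≠ a) :
    movedPts (update f a b) = movedPts f := by
  ext x
  by_cases hxa : x = a <;> simp [mem_movedPts, hxa, hfa, hba]

/-- If `a` was fixed, one more point moves but no isolated cycle appears; if `a` was moved,
only the isolated cycle through `f a` can be new. -/
lemma arcCost_comp_arcMap_le (hab : a ≠ b) : arcCost (f ∘ arcMap a b) ≤ arcCost f + 1 := by
  have hmoved : #(movedPts (f ∘ arcMap a b)) ≤ #(insert a (movedPts f)) := by
    rw [comp_arcMap]; exact card_le_card movedPts_update_subset
  unfold arcCost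
  by_cases hfa : f a = a
  · have hcyc : isolatedCycles (f ∘ arcMap a b) ⊆ isolatedCycles f := fun K hK =>
      have hK := mem_isolatedCycles.1 hK
      mem_isolatedCycles.2 (hK.of_comp_arcMap hab (by rw [hfa]; exact hK.notMem_of_comp_arcMap hab))
    have := card_le_card hcyc
    have := card_insert_le a (movedPts f)
    omega
  · have hcyc : isolatedCycles (f ∘ arcMap a b) ⊆
        isolatedCycles f ∪ (isolatedCycles (f ∘ arcMap a b)).filter (f a ∈ ·) := by
      intro K hK
      by_cases hfaK : f a ∈ K
      · exact mem_union_right _ (mem_filter.2 ⟨hK, hfaK⟩)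
      · exact mem_union_left _
          (mem_isolatedCycles.2 ((mem_isolatedCycles.1 hK).of_comp_arcMap hab hfaK))
    have := (card_le_card hcyc).trans (card_union_le _ _)
    have := card_filter_mem_isolatedCycles_le_one (f := f ∘ arcMap a b) (x := f a)
    rw [insert_eq_of_mem (mem_movedPts.2 hfa)] at hmoved
    omega

theorem arcCost_wordEval_le (w : List (V × V)) (hw : ∀ e ∈ w, e.1 ≠ e.2) :
    arcCost (wordEval w) ≤ w.length := by
  induction w with
  | nil => simp [wordEval_nil, arcCost_id]
  | cons e w ih =>
    rw [wordEval_cons, List.length_cons]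
    have := arcCost_comp_arcMap_le (f := wordEval w) (hw e List.mem_cons_self)
    have := ih fun e' he' => hw e' (List.mem_cons_of_mem e he')
    omega

end Counting

section UpperBound

variable [Fintype V] [DecidableEq V] {f : V → V} {C : Finset V} {y z : V}

/-- As `f^[N] = id` for `N = (card V)!`, the forward orbit of a moved point is an isolated
cycle. -/
lemma eq_id_of_injective (hf : Injective f) (h : ∀ C, ¬ IsIsolatedCycle f C) : f = id := by
  set N := (Fintype.card V).factorial
  have hN : ∀ k x, f^[N * k] x = x := fun k x => by
    rw [iterate_mul, injective_iff_iterate_factorial_card_eq_id.1 hf, iterate_id, id]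
  have hNpos : 0 < N := Nat.factorial_pos _
  classical
  funext x
  by_contra hx
  have mem : ∀ {y}, y ∈ univ.filter (fun y => ∃ k, f^[k] x = y) ↔ ∃ k, f^[k] x = y := by simp
  apply h (univ.filter fun y => ∃ k, f^[k] x = y)
  refine ⟨⟨x, mem.2 ⟨0, rfl⟩⟩, fun y hy => ?_, fun y hy => ?_, fun y hy hfy => ?_,
    fun y hy y' hy' => ?_⟩
  · obtain ⟨k, rfl⟩ := mem.1 hy
    exact mem.2 ⟨k + 1, iterate_succ_apply' f k x⟩
  · obtain ⟨k, hk⟩ := mem.1 hy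
    refine mem.2 ⟨N - 1 + k, ?_⟩
    rw [iterate_add_apply, hk, ← iterate_succ_apply, Nat.succ_eq_add_one,
      Nat.sub_add_cancel hNpos]
    simpa using hN 1 y
  · obtain ⟨k, rfl⟩ := mem.1 hy
    rw [← iterate_succ_apply' f k x, iterate_succ_apply] at hfy
    exact hx (hf.iterate k hfy)
  · obtain ⟨i, rfl⟩ := mem.1 hy
    obtain ⟨j, rfl⟩ := mem.1 hy'
    refine ⟨j + (N - 1) * i, ?_⟩
    rw [← iterate_add_apply, add_assoc, ← Nat.succ_mul, Nat.succ_eq_add_one,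
      Nat.sub_add_cancel hNpos, iterate_add_apply, hN]

lemma not_injective_or_eq_id (h : ∀ C, ¬ IsIsolatedCycle f C) : ¬ Injective f ∨ f = id :=
  or_iff_not_imp_left.2 fun hf => eq_id_of_injective (not_not.1 hf) h

lemma arcCost_update_self_lt (hfa : f y ≠ y) (h : ∀ C, ¬ IsIsolatedCycle (update f y y) C) :
    arcCost (update f y y) < arcCost f := by
  rw [arcCost, arcCost, movedPts_update_self, isolatedCycles_eq_empty.2 h, card_empty]
  have := card_erase_lt_of_mem (mem_movedPts.2 hfa)
  omega

/-- No new cycle closes, since no orbit can enter `C` from outside. -/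
lemma IsIsolatedCycle.isolatedCycles_update (hC : IsIsolatedCycle f C) (hy : y ∈ C)
    (hz : ∀ x, f x ≠ z) : isolatedCycles (update f y z) = (isolatedCycles f).erase C := by
  have hzC : z ∉ C := hC.notMem_of_forall_ne hz
  have hcompl : Set.MapsTo (update f y z) (↑C)ᶜ (↑C)ᶜ := fun x hx => by
    simp only [update_of_ne (ne_of_mem_of_not_mem hy hx).symm]
    exact fun hfx => hx (hC.mem_of_apply_mem hfx)
  have hfy : ∀ x, update f y z x ≠ f y := by
    intro x hx
    by_cases hxy : x = y
    · rw [hxy, update_self] at hx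
      exact hz y hx.symm
    · rw [update_of_ne hxy] at hx
      exact hxy (hC.injOn (hC.mem_of_apply_mem (hx ▸ hC.mapsTo hy)) hy hx)
  ext K
  rw [mem_erase, mem_isolatedCycles, mem_isolatedCycles]
  constructor
  · intro hK
    have hzK : z ∉ K := by
      intro hzK
      obtain ⟨x, hxK, hx⟩ := hK.exists_apply_eq hzK
      have hxy : x = y := by_contra fun hxy => hz x (by rwa [update_of_ne hxy] at hx)
      obtain ⟨k, hk⟩ := hK.exists_iterate_eq hzK (hxy ▸ hxK)
      exact hcompl.iterate k hzC (by rw [hk]; exact hy)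
    have hyK : y ∉ K := fun hyK => hzK (by simpa using hK.mapsTo hyK)
    exact ⟨fun h => hyK (h ▸ hy), hK.of_update hyK (hK.notMem_of_forall_ne hfy)⟩
  · rintro ⟨hne, hK⟩
    have hyK : y ∉ K := disjoint_left.1 (hC.disjoint hK hne.symm) hy
    exact hK.isIsolatedCycle_update hyK (hK.notMem_of_forall_ne hz)

theorem exists_arc_reduction (hf : ¬ Injective f) :
    ∃ a b g, a ≠ b ∧ (¬ Injective g ∨ g = id) ∧ arcCost g < arcCost f ∧
      (arcMap a b ∘ g = f ∨ g ∘ arcMap a b = f) := by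
  obtain ⟨z, hz⟩ : ∃ z, ∀ x, f x ≠ z := by
    simpa [Surjective] using mt Finite.injective_iff_surjective.2 hf
  by_cases hC : ∃ C, IsIsolatedCycle f C
  · obtain ⟨C, hC⟩ := hC
    obtain ⟨y, hy⟩ := hC.nonempty
    refine ⟨z, f y, update f y z, (hz y).symm, Or.inl (hC.not_injective_update hy hf), ?_,
      Or.inl (arcMap_comp_update hz)⟩
    have hzy : z ≠ y := ne_of_mem_of_not_mem hy (hC.notMem_of_forall_ne hz) |>.symm
    rw [arcCost, arcCost, movedPts_update_of_ne (hC.apply_ne hy) hzy,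
      hC.isolatedCycles_update hy hz, card_erase_of_mem (mem_isolatedCycles.2 hC)]
    have := card_pos.2 ⟨C, mem_isolatedCycles.2 hC⟩
    omega
  simp only [not_exists] at hC
  by_cases hK : ∃ K, IsIsolatedCycle (update f z z) K
  · obtain ⟨K, hK⟩ := hK
    obtain ⟨a, haz, hfa, hmov, hcyc⟩ := exists_update_self_of_isIsolatedCycle_update hC hK
    exact ⟨a, z, update f a a, haz, not_injective_or_eq_id hcyc, arcCost_update_self_lt hmov hcyc,
      Or.inr (update_comp_arcMap haz hfa)⟩
  · simp only [not_exists] at hK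
    exact ⟨z, f z, update f z z, (hz z).symm, not_injective_or_eq_id hK,
      arcCost_update_self_lt (hz z) hK, Or.inl (arcMap_comp_update hz)⟩

theorem exists_wordEval_eq (hf : ¬ Injective f ∨ f = id) :
    ∃ w : List (V × V), (∀ e ∈ w, e.1 ≠ e.2) ∧ wordEval w = f ∧ w.length ≤ arcCost f := by
  induction hc : arcCost f using Nat.strong_induction_on generalizing f with
  | _ c ih =>
  rcases hf with hf | rfl
  · obtain ⟨a, b, g, hab, hg, hlt, hfg⟩ := exists_arc_reduction hf
    obtain ⟨w, hw, rfl, hlen⟩ := ih _ (hc ▸ hlt) hg rfl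
    rcases hfg with rfl | rfl
    · refine ⟨w ++ [(a, b)], ?_, wordEval_concat w (a, b), by simp; omega⟩
      exact List.forall_mem_append.2 ⟨hw, List.forall_mem_singleton.2 hab⟩
    · refine ⟨(a, b) :: w, ?_, rfl, by simp; omega⟩
      exact List.forall_mem_cons.2 ⟨hab, hw⟩
  · exact ⟨[], by simp, rfl, by simp⟩

theorem arcLen_eq_arcCost (hf : ¬ Injective f) : arcLen (fun a b : V => a ≠ b) f = arcCost f := by
  unfold arcLen
  obtain ⟨w, hw, hwf, hlen⟩ := exists_wordEval_eq (Or.inl hf)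
  have hmem : w.length ∈ {k | ∃ w : List (V × V), w.length = k ∧ (∀ e ∈ w, e.1 ≠ e.2) ∧
      wordEval w = f} := ⟨w, rfl, hw, hwf⟩
  refine le_antisymm ((Nat.sInf_le hmem).trans hlen) ?_
  obtain ⟨w', hlen', hw', rfl⟩ := Nat.sInf_mem ⟨_, hmem⟩
  rw [← hlen']
  exact arcCost_wordEval_le w' hw'

end UpperBound

section Rank

variable [Fintype V] [DecidableEq V] {f : V → V}

lemma rnk_eq_card_image (f : V → V) : rnk f = #(univ.image f) := by
  rw [rnk, ← Set.ncard_coe_finset, coe_image, coe_univ, Set.image_univ]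

lemma rnk_lt_card (hf : ¬ Surjective f) : rnk f < Fintype.card V := by
  rw [rnk_eq_card_image, ← card_univ]
  refine card_lt_card (ssubset_univ_iff.2 fun h => hf fun y => ?_)
  obtain ⟨x, -, hx⟩ := mem_image.1 (h ▸ mem_univ y)
  exact ⟨x, hx⟩

lemma two_mul_card_isolatedCycles_le :
    2 * #(isolatedCycles f) ≤ #((isolatedCycles f).biUnion id) := by
  rw [card_biUnion (t := id) fun C hC C' hC' hne =>
    (mem_isolatedCycles.1 hC).disjoint (mem_isolatedCycles.1 hC') hne]
  calc 2 * #(isolatedCycles f) = ∑ _C ∈ isolatedCycles f, 2 := by simp [mul_comm]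
    _ ≤ ∑ C ∈ isolatedCycles f, #C :=
      sum_le_sum fun C hC => (mem_isolatedCycles.1 hC).two_le_card

/-- The image of `f` contains the fixed points, the isolated cycles, and `f z`, `f (f z)` for
some `z ∉ im f`; these two lie on no isolated cycle and are distinct if `f` has no fixed point. -/
lemma two_mul_card_isolatedCycles_add_two_le (hf : ¬ Surjective f) :
    2 * #(isolatedCycles f) + 2 ≤ rnk f + #(univ.filter fun x => f x = x) := by
  obtain ⟨z, hz⟩ : ∃ z, ∀ x, f x ≠ z := by simpa [Surjective] using hf
  set F := univ.filter fun x => f x = x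
  set T := insert (f z) (insert (f (f z)) F)
  have hU := two_mul_card_isolatedCycles_le (f := f)
  set U := (isolatedCycles f).biUnion id
  have hTU : Disjoint T U := by
    refine disjoint_left.2 fun x hxT hxU => ?_
    obtain ⟨C, hC, hxC⟩ := mem_biUnion.1 hxU
    have hC := mem_isolatedCycles.1 hC
    have hzC := hC.notMem_of_forall_ne hz
    rcases mem_insert.1 hxT with rfl | hxT
    · exact hzC (hC.mem_of_apply_mem hxC)
    rcases mem_insert.1 hxT with rfl | hxT
    · exact hzC (hC.mem_of_apply_mem (hC.mem_of_apply_mem hxC))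
    · exact hC.apply_ne hxC (mem_filter.1 hxT).2
  have hsub : T ∪ U ⊆ univ.image f := by
    intro x hx
    rw [mem_image]
    rcases mem_union.1 hx with hxT | hxU
    · rcases mem_insert.1 hxT with rfl | hxT
      · exact ⟨z, mem_univ _, rfl⟩
      rcases mem_insert.1 hxT with rfl | hxT
      · exact ⟨f z, mem_univ _, rfl⟩
      · exact ⟨x, mem_univ _, (mem_filter.1 hxT).2⟩
    · obtain ⟨C, hC, hxC⟩ := mem_biUnion.1 hxU
      obtain ⟨y, -, hy⟩ := (mem_isolatedCycles.1 hC).exists_apply_eq hxC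
      exact ⟨y, mem_univ _, hy⟩
  have hT : 2 ≤ #T + #F := by
    rcases F.eq_empty_or_nonempty with hF | hF
    · have hne : f z ≠ f (f z) := fun h => by
        simpa [F, ← h] using eq_empty_iff_forall_notMem.1 hF (f z)
      simp [T, hF, hne]
    · have := card_pos.2 hF
      have : 0 < #T := card_pos.2 (insert_nonempty _ _)
      omega
  have := card_le_card hsub
  rw [card_union_of_disjoint hTU] at this
  rw [rnk_eq_card_image]
  omega

theorem arcCost_le (hf : ¬ Surjective f) : arcCost f ≤ Fintype.card V - 1 + rnk f / 2 := by
  have := two_mul_card_isolatedCycles_add_two_le hf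
  have : #(movedPts f) + #(univ.filter fun x => f x = x) = Fintype.card V := by
    rw [movedPts, add_comm]
    exact card_filter_add_card_filter_not _
  unfold arcCost
  omega

theorem arcLen_le_of_not_surjective (hf : ¬ Surjective f) :
    arcLen (fun a b : V => a ≠ b) f ≤ Fintype.card V - 1 + rnk f / 2 :=
  arcLen_eq_arcCost (mt Finite.injective_iff_surjective.1 hf) ▸ arcCost_le hf

end Rank

section PairMap

variable {n m : ℕ} (hm : 2 * m ≤ n) (p : Fin n)

/-- `x + 1 - 2 (x % 2)` is the partner of `x` in its pair `{2i, 2i + 1}`. -/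
def pairMap (x : Fin n) : Fin n :=
  if h : x.val < 2 * m then ⟨x + 1 - 2 * (x % 2), by omega⟩ else p

variable {hm p} {x : Fin n}

lemma pairMap_val_of_lt (hx : x.val < 2 * m) : (pairMap hm p x).val = x + 1 - 2 * (x % 2) := by
  simp [pairMap, hx]

lemma pairMap_of_le (hx : 2 * m ≤ x.val) : pairMap hm p x = p := by
  simp [pairMap, not_lt.2 hx]

lemma image_pairMap {k : ℕ} (hk : ∀ x : Fin n, x.val < k ↔ x.val < 2 * m ∨ x = p) :
    univ.image (pairMap hm p) = univ.filter fun x : Fin n => x.val < k := by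
  ext x
  simp only [mem_image, mem_univ, true_and, mem_filter, hk]
  constructor
  · rintro ⟨y, rfl⟩
    by_cases hy : y.val < 2 * m
    · left
      rw [pairMap_val_of_lt hy]
      omega
    · exact Or.inr (pairMap_of_le (by omega))
  · intro hx
    by_cases h : x.val < 2 * m
    · refine ⟨⟨x + 1 - 2 * (x % 2), by omega⟩, Fin.ext ?_⟩
      rw [pairMap_val_of_lt (by simp; omega)]
      simp
      omega
    · exact ⟨x, (pairMap_of_le (by omega)).trans (hx.resolve_left h).symm⟩

lemma rnk_pairMap {k : ℕ} (hkn : k ≤ n) (hk : ∀ x : Fin n, x.val < k ↔ x.val < 2 * m ∨ x = p) :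
    rnk (pairMap hm p) = k := by
  rw [rnk_eq_card_image, image_pairMap hk, Fin.card_filter_val_lt, min_eq_right hkn]

lemma pairMap_ne_of_lt (hx : x.val < 2 * m) : pairMap hm p x ≠ x := by
  rw [Ne, Fin.ext_iff, pairMap_val_of_lt hx]
  omega

lemma erase_subset_movedPts_pairMap : univ.erase p ⊆ movedPts (pairMap hm p) := by
  intro x hx
  rw [mem_movedPts]
  by_cases h : x.val < 2 * m
  · exact pairMap_ne_of_lt h
  · rw [pairMap_of_le (by omega)]
    exact (ne_of_mem_erase hx).symm

lemma isIsolatedCycle_pairMap {i : ℕ} (hi : i < m) (hp : p.val / 2 ≠ i) :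
    IsIsolatedCycle (pairMap hm p) (univ.filter fun x : Fin n => x.val / 2 = i) := by
  have mem : ∀ {x : Fin n}, x ∈ univ.filter (fun x : Fin n => x.val / 2 = i) ↔ x.val / 2 = i := by
    simp
  have hlt : ∀ {x : Fin n}, x.val / 2 = i → x.val < 2 * m := fun hx => by omega
  refine ⟨⟨⟨2 * i, by omega⟩, mem.2 (by simp)⟩, fun x hx => ?_, fun y hy => ?_,
    fun x hx => pairMap_ne_of_lt (hlt (mem.1 hx)), fun x hx y hy => ?_⟩
  · rw [Finset.mem_coe, mem, pairMap_val_of_lt (hlt (mem.1 hx))]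
    have := mem.1 hx
    omega
  · rw [mem]
    by_cases h : y.val < 2 * m
    · have := mem.1 hy
      rw [pairMap_val_of_lt h] at this
      omega
    · rw [pairMap_of_le (by omega)] at hy
      exact absurd (mem.1 hy) hp
  · by_cases hxy : x = y
    · exact ⟨0, hxy⟩
    · refine ⟨1, Fin.ext ?_⟩
      rw [iterate_one, pairMap_val_of_lt (hlt (mem.1 hx))]
      have := mem.1 hx
      have := mem.1 hy
      have := Fin.val_ne_of_ne hxy
      omega

lemma card_erase_le_card_isolatedCycles_pairMap :
    #((range m).erase (p.val / 2)) ≤ #(isolatedCycles (pairMap hm p)) := by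
  refine card_le_card_of_injOn (fun i => univ.filter fun x : Fin n => x.val / 2 = i)
    (fun i hi => ?_) (fun i hi j hj hij => ?_)
  · obtain ⟨hip, hi⟩ := mem_erase.1 hi
    exact mem_isolatedCycles.2 (isIsolatedCycle_pairMap (mem_range.1 hi) (Ne.symm hip))
  · have hi := mem_range.1 (mem_erase.1 hi).2
    have h2i : (⟨2 * i, by omega⟩ : Fin n) ∈ univ.filter fun x : Fin n => x.val / 2 = j := by
      have hij : (univ.filter fun x : Fin n => x.val / 2 = i) =
          univ.filter fun x : Fin n => x.val / 2 = j := hij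
      rw [← hij]
      simp
    simp at h2i
    omega

end PairMap

theorem exists_rnk_eq_arcLen_eq {n r : ℕ} (hr1 : 1 ≤ r) (hr2 : r ≤ n - 1) :
    ∃ α : Fin n → Fin n, ¬ Bijective α ∧ rnk α = r ∧
      arcLen (fun a b : Fin n => a ≠ b) α = n - 1 + r / 2 := by
  have hm : 2 * (r / 2) ≤ n := by omega
  -- For odd `r` the point `r - 1` is fixed; for even `r` the point `0` is hit from outside its
  -- pair, which is then not isolated.
  obtain ⟨p, hp⟩ : ∃ p : Fin n, p.val = if r % 2 = 1 then r - 1 else 0 :=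
    ⟨⟨if r % 2 = 1 then r - 1 else 0, by split_ifs <;> omega⟩, rfl⟩
  have hrnk : rnk (pairMap hm p) = r := rnk_pairMap (by omega) fun x => by
    rw [Fin.ext_iff, hp]
    split_ifs <;> omega
  have hsurj : ¬ Surjective (pairMap hm p) := fun h => by
    rw [rnk_eq_card_image, image_univ_of_surjective h, card_univ, Fintype.card_fin] at hrnk
    omega
  refine ⟨pairMap hm p, fun h => hsurj h.2, hrnk, ?_⟩
  rw [arcLen_eq_arcCost (mt Finite.injective_iff_surjective.1 hsurj)]
  refine le_antisymm (by simpa [hrnk] using arcCost_le hsurj) ?_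
  have hmoved := card_le_card (erase_subset_movedPts_pairMap (hm := hm) (p := p))
  have hcyc := card_erase_le_card_isolatedCycles_pairMap (hm := hm) (p := p)
  rw [card_erase_of_mem (mem_univ p), card_univ, Fintype.card_fin] at hmoved
  unfold arcCost
  by_cases hodd : r % 2 = 1
  · rw [if_pos hodd] at hp
    rw [erase_eq_of_notMem (by simp; omega), card_range] at hcyc
    omega
  · rw [if_neg hodd] at hp
    rw [card_erase_of_mem (by simp; omega), card_range] at hcyc
    have hpα : p ∈ movedPts (pairMap hm p) := mem_movedPts.2 (pairMap_ne_of_lt (by omega))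
    have := card_le_card (insert_subset hpα (erase_subset_movedPts_pairMap (hm := hm) (p := p)))
    rw [insert_erase (mem_univ p), card_univ, Fintype.card_fin] at this
    omega

/-- `n + ⌊(r−2)/2⌋` is written `n − 1 + r / 2`, which agrees with it for all `r ≥ 0` and stays
in `ℕ`. -/
theorem stmt1 (n : ℕ) (hn : 2 ≤ n) (r : ℕ) (hr1 : 1 ≤ r) (hr2 : r ≤ n - 1) :
    IsGreatest {k | ∃ α : Fin n → Fin n, ¬ Function.Bijective α ∧ rnk α = r ∧
        arcLen (fun a b : Fin n => a ≠ b) α = k} (n - 1 + r / 2) ∧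
    IsGreatest {k | ∃ α : Fin n → Fin n, ¬ Function.Bijective α ∧
        arcLen (fun a b : Fin n => a ≠ b) α = k} (3 * (n - 1) / 2) := by
  have hbound : ∀ α : Fin n → Fin n, ¬ Bijective α →
      arcLen (fun a b : Fin n => a ≠ b) α ≤ n - 1 + rnk α / 2 ∧ rnk α < n := fun α hα => by
    have hsurj := mt Surjective.bijective_of_finite hα
    simpa using And.intro (arcLen_le_of_not_surjective hsurj) (rnk_lt_card hsurj)
  obtain ⟨α, hα, hrnk, hlen⟩ := exists_rnk_eq_arcLen_eq hr1 hr2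
  obtain ⟨β, hβ, -, hβlen⟩ := exists_rnk_eq_arcLen_eq (n := n) (r := n - 1) (by omega) le_rfl
  refine ⟨⟨⟨α, hα, hrnk, hlen⟩, ?_⟩, ⟨β, hβ, by omega⟩, ?_⟩
  · rintro k ⟨α, hα, rfl, rfl⟩
    exact (hbound α hα).1
  · rintro k ⟨α, hα, rfl⟩
    have := hbound α hα
    omega
end
end

section
/- Let D be a simple digraph on {1,…,n} with n ≥ 3 and let α ∈ ⟨D⟩. Then ℓ(D, α) ≥ n + cycl(α) − fix(α) ≥ n − fix(α) ≥ n − rk(α). -/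
noncomputable section

variable {V : Type*}

section Aux

variable [DecidableEq V]

lemma cyclicOrbit_mapsTo {f : V → V} {C : Set V} (h : IsCyclicOrbit f C) :
    ∀ x ∈ C, f x ∈ C := by
  obtain ⟨-, ⟨x₀, hx₀, ⟨k, hk, hper⟩, hC⟩, -⟩ := h
  intro x hx
  rw [hC] at hx ⊢
  obtain ⟨m, rfl⟩ := hx
  exact ⟨m + 1, by rw [Function.iterate_succ_apply']⟩

lemma cyclicOrbit_pred {f : V → V} {C : Set V} (h : IsCyclicOrbit f C) :
    ∀ y ∈ C, ∃ x ∈ C, f x = y := by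
  obtain ⟨-, ⟨x₀, hx₀, ⟨k, hk, hper⟩, hC⟩, -⟩ := h
  intro y hy
  rw [hC] at hy
  obtain ⟨m, rfl⟩ := hy
  refine ⟨f^[m + k - 1] x₀, by rw [hC]; exact ⟨m + k - 1, rfl⟩, ?_⟩
  have h1 : m + k - 1 + 1 = m + k := by omega
  calc f (f^[m + k - 1] x₀) = f^[m + k - 1 + 1] x₀ := (Function.iterate_succ_apply' f _ x₀).symm
    _ = f^[m + k] x₀ := by rw [h1]
    _ = f^[m] x₀ := by rw [Function.iterate_add_apply, hper]

lemma orbit_shift {f : V → V} {x : V} {k : ℕ} (hk : 0 < k) (hx : f^[k] x = x) (m : ℕ) :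
    {y | ∃ j, f^[j] x = y} = {y | ∃ j, f^[j] (f^[m] x) = y} := by
  ext y
  simp only [Set.mem_setOf_eq]
  constructor
  · rintro ⟨j, rfl⟩
    refine ⟨j + m * k - m, ?_⟩
    have hmk : m ≤ m * k := by
      calc m = m * 1 := (mul_one m).symm
        _ ≤ m * k := Nat.mul_le_mul_left m hk
    have h1 : j + m * k - m + m = j + m * k := by omega
    rw [← Function.iterate_add_apply, h1, Function.iterate_add_apply, mul_comm m k,
      Function.iterate_mul, Function.iterate_fixed hx m]
  · rintro ⟨j, rfl⟩
    exact ⟨j + m, Function.iterate_add_apply f j m x⟩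

lemma cyclicOrbit_eq {f : V → V} {C C' : Set V} (h : IsCyclicOrbit f C)
    (h' : IsCyclicOrbit f C') {z : V} (hz : z ∈ C) (hz' : z ∈ C') : C = C' := by
  obtain ⟨-, ⟨x, hx, ⟨k, hk, hper⟩, hC⟩, -⟩ := h
  obtain ⟨-, ⟨x', hx', ⟨k', hk', hper'⟩, hC'⟩, -⟩ := h'
  rw [hC] at hz
  obtain ⟨m, rfl⟩ := hz
  rw [hC'] at hz'
  obtain ⟨m', hm'⟩ := hz'
  rw [hC, hC', orbit_shift hk hper m, orbit_shift hk' hper' m', hm']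

lemma iterate_congr {f g : V → V} {C : Set V} (hfg : ∀ x ∈ C, f x = g x)
    (hcl : ∀ x ∈ C, g x ∈ C) {x : V} (hx : x ∈ C) (k : ℕ) :
    f^[k] x = g^[k] x ∧ g^[k] x ∈ C := by
  induction k with
  | zero => exact ⟨rfl, hx⟩
  | succ k ih =>
    obtain ⟨h1, h2⟩ := ih
    refine ⟨?_, ?_⟩
    · rw [Function.iterate_succ_apply', Function.iterate_succ_apply', h1, hfg _ h2]
    · rw [Function.iterate_succ_apply']
      exact hcl _ h2

lemma gamma_ne_a {β : V → V} {a b : V} (hab : a ≠ b) (x : V) :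
    arcMap a b (β x) ≠ a := by
  unfold arcMap
  split
  · exact hab.symm
  · assumption

lemma a_not_mem_orbit {β : V → V} {a b : V} (hab : a ≠ b) {C : Set V}
    (hC : IsCyclicOrbit (fun x => arcMap a b (β x)) C) : a ∉ C := by
  intro haC
  obtain ⟨x, -, hx⟩ := cyclicOrbit_pred hC a haC
  exact gamma_ne_a hab x hx

lemma orbit_transfer {β : V → V} {a b : V} (hab : a ≠ b) {C : Set V}
    (hC : IsCyclicOrbit (fun x => arcMap a b (β x)) C) (hb : b ∉ C) :
    IsCyclicOrbit β C := by
  have haC : a ∉ C := a_not_mem_orbit hab hC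
  have hmaps := cyclicOrbit_mapsTo hC
  have heq : ∀ x ∈ C, β x = arcMap a b (β x) := by
    intro x hx
    have hmem : arcMap a b (β x) ∈ C := hmaps x hx
    unfold arcMap at hmem ⊢
    by_cases h : β x = a
    · simp only [h, if_pos rfl] at hmem
      exact absurd hmem hb
    · simp [h]
  obtain ⟨hcard, ⟨x₀, hx₀, ⟨k, hk, hper⟩, hCeq⟩, hclosed⟩ := hC
  refine ⟨hcard, ⟨x₀, hx₀, ⟨k, hk, ?_⟩, ?_⟩, ?_⟩
  · rw [(iterate_congr heq hmaps hx₀ k).1]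
    exact hper
  · rw [hCeq]
    ext y
    simp only [Set.mem_setOf_eq]
    constructor
    · rintro ⟨j, rfl⟩
      exact ⟨j, (iterate_congr heq hmaps hx₀ j).1⟩
    · rintro ⟨j, rfl⟩
      exact ⟨j, ((iterate_congr heq hmaps hx₀ j).1).symm⟩
  · intro y hy
    by_cases h : β y = a
    · exact absurd (h ▸ hy) haC
    · apply hclosed
      show arcMap a b (β y) ∈ C
      unfold arcMap
      simpa [h] using hy

lemma key_step [Finite V] (a b : V) (hab : a ≠ b) (β : V → V) :
    fixCnt β + cyclCnt (fun x => arcMap a b (β x)) ≤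
      fixCnt (fun x => arcMap a b (β x)) + cyclCnt β + 1 := by
  set γ : V → V := fun x => arcMap a b (β x) with hγ
  by_cases h1 : β a = a
  · -- a is a fixed point of β: lose at most one fixed point, no new cyclic orbit
    have hfix : fixCnt β ≤ fixCnt γ + 1 := by
      have hsub : {x | β x = x} ⊆ {x | γ x = x} ∪ {a} := by
        intro x hx
        by_cases hxa : x = a
        · exact Or.inr hxa
        · left
          simp only [Set.mem_setOf_eq] at hx ⊢
          show arcMap a b (β x) = x
          have hne : β x ≠ a := by rw [hx]; exact hxa
          unfold arcMap
          simp [hne, hx, hxa]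
      calc fixCnt β ≤ ({x | γ x = x} ∪ {a}).ncard :=
            Set.ncard_le_ncard hsub (Set.toFinite _)
        _ ≤ {x | γ x = x}.ncard + ({a} : Set V).ncard := Set.ncard_union_le _ _
        _ = fixCnt γ + 1 := by rw [Set.ncard_singleton]; rfl
    have hcyc : cyclCnt γ ≤ cyclCnt β := by
      apply Set.ncard_le_ncard _ (Set.toFinite _)
      intro C hC
      simp only [Set.mem_setOf_eq] at hC ⊢
      refine orbit_transfer hab hC ?_
      intro hbC
      apply a_not_mem_orbit hab hC
      apply hC.2.2 a
      show arcMap a b (β a) ∈ C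
      rw [h1]
      unfold arcMap
      simpa using hbC
    unfold fixCnt cyclCnt at *
    omega
  · -- a is not a fixed point of β: no fixed point lost, at most one new cyclic orbit
    have hfix : fixCnt β ≤ fixCnt γ := by
      apply Set.ncard_le_ncard _ (Set.toFinite _)
      intro x hx
      simp only [Set.mem_setOf_eq] at hx ⊢
      show arcMap a b (β x) = x
      have hxa : x ≠ a := by rintro rfl; exact h1 hx
      have hne : β x ≠ a := by rw [hx]; exact hxa
      unfold arcMap
      simp [hne, hx, hxa]
    have hcyc : cyclCnt γ ≤ cyclCnt β + 1 := by
      have hsub : {C : Set V | IsCyclicOrbit γ C} ⊆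
          {C : Set V | IsCyclicOrbit β C} ∪ {C : Set V | IsCyclicOrbit γ C ∧ b ∈ C} := by
        intro C hC
        simp only [Set.mem_setOf_eq] at hC
        by_cases hbC : b ∈ C
        · exact Or.inr ⟨hC, hbC⟩
        · exact Or.inl (orbit_transfer hab hC hbC)
      have hss : {C : Set V | IsCyclicOrbit γ C ∧ b ∈ C}.Subsingleton := by
        intro C hC C' hC'
        exact cyclicOrbit_eq hC.1 hC'.1 hC.2 hC'.2
      calc cyclCnt γ ≤ ({C : Set V | IsCyclicOrbit β C} ∪
              {C : Set V | IsCyclicOrbit γ C ∧ b ∈ C}).ncard :=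
            Set.ncard_le_ncard hsub (Set.toFinite _)
        _ ≤ {C : Set V | IsCyclicOrbit β C}.ncard +
              {C : Set V | IsCyclicOrbit γ C ∧ b ∈ C}.ncard := Set.ncard_union_le _ _
        _ ≤ cyclCnt β + 1 := by
            have := hss.eq_empty_or_singleton
            rcases this with h | ⟨x, h⟩
            · rw [h]
              unfold cyclCnt
              simp
            · rw [h, Set.ncard_singleton]
              unfold cyclCnt
              exact le_rfl
    omega

lemma word_bound [Finite V] (w : List (V × V)) (hw : ∀ e ∈ w, e.1 ≠ e.2) :
    Nat.card V + cyclCnt (wordEval w) ≤ fixCnt (wordEval w) + w.length := by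
  induction w using List.reverseRecOn with
  | nil =>
    have hfix : fixCnt (wordEval ([] : List (V × V))) = Nat.card V := by
      have : {x | wordEval ([] : List (V × V)) x = x} = Set.univ := by
        ext x; simp [wordEval]
      unfold fixCnt
      rw [this, Set.ncard_univ]
    have hcyc : cyclCnt (wordEval ([] : List (V × V))) = 0 := by
      unfold cyclCnt
      have hemp : {C : Set V | IsCyclicOrbit (wordEval ([] : List (V × V))) C} = ∅ := by
        ext C
        simp only [Set.mem_setOf_eq, Set.mem_empty_iff_false, iff_false]
        rintro ⟨hcard, ⟨x₀, hx₀, -, hC⟩, -⟩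
        have hid : wordEval ([] : List (V × V)) = id := rfl
        rw [hid] at hC
        simp only [Function.iterate_id, id_eq, exists_const] at hC
        have : C = {x₀} := by rw [hC]; ext y; simp [eq_comm]
        rw [this, Set.ncard_singleton] at hcard
        omega
      rw [hemp, Set.ncard_empty]
    simp [hfix, hcyc]
  | append_singleton w' e ih =>
    have hβγ : wordEval (w' ++ [e]) = fun x => arcMap e.1 e.2 (wordEval w' x) := by
      funext x
      simp [wordEval, List.foldl_append]
    have hkey := key_step e.1 e.2 (hw e (by simp)) (wordEval w')
    have ih' := ih (fun e' he' => hw e' (by simp [he']))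
    rw [hβγ]
    simp only [List.length_append, List.length_singleton]
    omega

end Aux

/-- for a simple digraph `D` on `{1,…,n}` with `n ≥ 3` and `α ∈ ⟨D⟩`,
`ℓ(D, α) ≥ n + cycl(α) − fix(α) ≥ n − fix(α) ≥ n − rk(α)`. -/
theorem stmt2 (n : ℕ) (hn : 3 ≤ n) (D : Fin n → Fin n → Prop) (hloop : ∀ v, ¬ D v v)
    (α : Fin n → Fin n) (hα : InGen D α) :
    n + cyclCnt α - fixCnt α ≤ arcLen D α ∧
    n - fixCnt α ≤ n + cyclCnt α - fixCnt α ∧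
    n - rnk α ≤ n - fixCnt α := by
  obtain ⟨w₀, hw₀ne, hw₀D, hw₀eval⟩ := hα
  refine ⟨?_, ?_, ?_⟩
  · unfold arcLen
    apply le_csInf
    · exact ⟨w₀.length, w₀, rfl, hw₀D, hw₀eval⟩
    · rintro k ⟨w, rfl, hD', heval⟩
      have hw : ∀ e ∈ w, e.1 ≠ e.2 := by
        rintro e he h
        exact hloop e.1 (by have := hD' e he; rwa [← h] at this)
      have hb := word_bound w hw
      rw [heval, Nat.card_eq_fintype_card, Fintype.card_fin] at hb
      omega
  · exact Nat.sub_le_sub_right (Nat.le_add_right n _) _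
  · apply Nat.sub_le_sub_left
    exact Set.ncard_le_ncard (fun x hx => ⟨x, hx⟩) (Set.toFinite _)
end
end
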